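/- arXiv:1502.07892 — 3 statements merged into one kernel-verified Lean document; each statement's English description precedes it below -/
import Mathlib

section
/- Let V be a Jordan bimodule over Kan(n). If I, J ⊆ {1,...,n} with |I ∩ J| ≥ 2, then [R_{e_I}, R_{\bar{e_J}}]_s = 0, and if I ∩ J ≠ ∅ then [R_{\bar{e_I}}, R_{\bar{e_J}}]_s = 0. -/
open Finset in
/-- The Grassmann algebra `G_n` on `n` odd generators, realized as coefficient
functions on subsets of `{1,...,n}` (the basis is `e_I`, `I ⊆ {1,...,n}`). -/
abbrev Gn (n : ℕ) (F : Type) := Finset (Fin n) → F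

/-- The sign `(-1)^{#{(i,j) ∈ I×J : j < i}}` arising when multiplying `e_I · e_J`. -/
def gsign {n : ℕ} (I J : Finset (Fin n)) : ℤ :=
  (-1) ^ (((I ×ˢ J).filter (fun p => p.2 < p.1)).card)

/-- Multiplication in the Grassmann algebra `G_n`. -/
def gmul {F : Type} [Field F] {n : ℕ} (f g : Gn n F) : Gn n F :=
  fun K => ∑ I ∈ K.powerset, (gsign I (K \ I) : F) * f I * g (K \ I)

/-- The odd superderivation `∂/∂e_j` of `G_n`. -/
def pd {F : Type} [Field F] {n : ℕ} (j : Fin n) (f : Gn n F) : Gn n F :=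
  fun I => if j ∈ I then 0 else ((-1 : F) ^ ((I.filter (fun i => i < j)).card)) * f (insert j I)

/-- The grade involution of `G_n`: `e_I ↦ (-1)^{|I|} e_I`. -/
def gInv {F : Type} [Field F] {n : ℕ} (f : Gn n F) : Gn n F :=
  fun I => ((-1 : F) ^ I.card) * f I

/-- The Poisson bracket `{f,g} = (-1)^{|f|} ∑_i (∂f/∂e_i)(∂g/∂e_i)` of `G_n`
(the sign `(-1)^{|f|}` is incorporated bilinearly via the grade involution). -/
def gbr {F : Type} [Field F] {n : ℕ} (f g : Gn n F) : Gn n F :=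
  ∑ i : Fin n, gmul (pd i (gInv f)) (pd i g)

/-- `f ∈ G_n` is homogeneous of parity `p`. -/
def homog {F : Type} [Field F] {n : ℕ} (p : ZMod 2) (f : Gn n F) : Prop :=
  ∀ I : Finset (Fin n), ((I.card : ZMod 2) ≠ p) → f I = 0

/-- `(-1)^p` as an element of the field `F`, for `p : ZMod 2`. -/
def sgn (F : Type) [Field F] (p : ZMod 2) : F := if p = 0 then 1 else -1
/-- The Kantor double `Kan(n) = J(G_n) = G_n ⊕ \bar{G_n}`: an element `(a,b)`
represents `a + \bar{b}`. -/
abbrev Kan (n : ℕ) (F : Type) := Gn n F × Gn n F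

/-- Multiplication of the Kantor double `Kan(n)`; the signs `(-1)^{|g|}` of the
Kantor doubling process are incorporated bilinearly via the grade involution. -/
def kmul {F : Type} [Field F] {n : ℕ} (x y : Kan n F) : Kan n F :=
  (gmul x.1 y.1 + gbr x.2 (gInv y.2), gmul x.1 y.2 + gmul x.2 (gInv y.1))

/-- The basis element `e_I` of `G_n` (coefficient `1` at `I`). -/
def single {F : Type} [Field F] {n : ℕ} (I : Finset (Fin n)) : Gn n F :=
  fun J => if J = I then 1 else 0

/-- The element `e_I ∈ Kan(n)`. -/
def eK {F : Type} [Field F] {n : ℕ} (I : Finset (Fin n)) : Kan n F := (single I, 0)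

/-- The element `\bar{e_I} ∈ Kan(n)`. In particular `beK ∅ = \bar{1}`. -/
def beK {F : Type} [Field F] {n : ℕ} (I : Finset (Fin n)) : Kan n F := (0, single I)

/-- Homogeneity of parity `p` in `Kan(n)` (the bar flips parity). -/
def kHomog {F : Type} [Field F] {n : ℕ} (p : ZMod 2) (x : Kan n F) : Prop :=
  homog p x.1 ∧ homog (p + 1) x.2

/-- Even part of an element of `G_n`. -/
def evenP {F : Type} [Field F] {n : ℕ} (f : Gn n F) : Gn n F :=
  fun I => if (I.card : ZMod 2) = 0 then f I else 0

/-- Odd part of an element of `G_n`. -/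
def oddP {F : Type} [Field F] {n : ℕ} (f : Gn n F) : Gn n F :=
  fun I => if (I.card : ZMod 2) = 1 then f I else 0

/-- Even part of an element of `Kan(n)`. -/
def kEvenPart {F : Type} [Field F] {n : ℕ} (x : Kan n F) : Kan n F := (evenP x.1, oddP x.2)

/-- Odd part of an element of `Kan(n)`. -/
def kOddPart {F : Type} [Field F] {n : ℕ} (x : Kan n F) : Kan n F := (oddP x.1, evenP x.2)

/-- A super vector space is encoded as a product `V0 × V1`; homogeneity of parity `p`. -/
def vHomog {V0 V1 : Type} [Zero V0] [Zero V1] (p : ZMod 2) (v : V0 × V1) : Prop :=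
  if p = 0 then v.2 = 0 else v.1 = 0

/-- The left action of `Kan(n)` on a superbimodule determined from the right action
`act` by supercommutativity: `a·v = (-1)^{|a||v|} v·a` for homogeneous `a, v`. -/
def leftAct {F : Type} [Field F] {n : ℕ} {V0 V1 : Type} [AddCommGroup V0] [Module F V0]
    [AddCommGroup V1] [Module F V1]
    (act : V0 × V1 →ₗ[F] Kan n F →ₗ[F] V0 × V1) (x : Kan n F) (w : V0 × V1) : V0 × V1 :=
  act w (kEvenPart x) + act ((w.1, 0) : V0 × V1) (kOddPart x)
    - act ((0, w.2) : V0 × V1) (kOddPart x)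

/-- Multiplication in the split null extension `E = Kan(n) ⊕ V`. -/
def emul {F : Type} [Field F] {n : ℕ} {V0 V1 : Type} [AddCommGroup V0] [Module F V0]
    [AddCommGroup V1] [Module F V1]
    (act : V0 × V1 →ₗ[F] Kan n F →ₗ[F] V0 × V1)
    (z w : Kan n F × (V0 × V1)) : Kan n F × (V0 × V1) :=
  (kmul z.1 w.1, act z.2 w.1 + leftAct act z.1 w.2)

/-- Homogeneity in the split null extension. -/
def eHomog {F : Type} [Field F] {n : ℕ} {V0 V1 : Type} [AddCommGroup V0] [Module F V0]
    [AddCommGroup V1] [Module F V1] (p : ZMod 2) (z : Kan n F × (V0 × V1)) : Prop :=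
  kHomog p z.1 ∧ vHomog p z.2

/-- A supercommutative superalgebra structure `mul` (with homogeneity predicate `hom`)
is Jordan: supercommutativity and the linearized super Jordan identity hold for
homogeneous elements. -/
def JordanSuper (F : Type) [Field F] {E : Type} [AddCommGroup E] [Module F E]
    (hom : ZMod 2 → E → Prop) (mul : E → E → E) : Prop :=
  (∀ (p q : ZMod 2) (x y : E), hom p x → hom q y → mul x y = sgn F (p * q) • mul y x) ∧
  (∀ (px py pz pt : ZMod 2) (x y z t : E),
      hom px x → hom py y → hom pz z → hom pt t →
      mul (mul (mul x y) z) t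
        + sgn F (py * pz + py * pt + pz * pt) • mul (mul (mul x t) z) y
        + sgn F (px * py + px * pz + px * pt + pz * pt) • mul (mul (mul y t) z) x
      = mul (mul x y) (mul z t) + sgn F (py * pz) • mul (mul x z) (mul y t)
        + sgn F (pt * (py + pz)) • mul (mul x t) (mul y z))

/-- `V = V0 ⊕ V1` with right action `act` is a Jordan superbimodule over `Kan(n)`:
the split null extension `Kan(n) ⊕ V` is a (graded) Jordan superalgebra. -/
def IsJordanBimod {F : Type} [Field F] {n : ℕ} {V0 V1 : Type} [AddCommGroup V0] [Module F V0]
    [AddCommGroup V1] [Module F V1]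
    (act : V0 × V1 →ₗ[F] Kan n F →ₗ[F] V0 × V1) : Prop :=
  JordanSuper F (E := Kan n F × (V0 × V1)) eHomog (emul act) ∧
  (∀ (p q : ZMod 2) (z w : Kan n F × (V0 × V1)),
      eHomog p z → eHomog q w → eHomog (p + q) (emul act z w))

section Aux

variable {F : Type} [Field F] {n : ℕ}

lemma zmod2_cases (p : ZMod 2) : p = 0 ∨ p = 1 := by revert p; decide

lemma sgn_zero : sgn F 0 = 1 := if_pos rfl
lemma sgn_one : sgn F 1 = -1 := if_neg (by decide)

lemma sgn_mul_sgn (p q : ZMod 2) : sgn F p * sgn F q = sgn F (p + q) := by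
  have h0 : sgn F 0 = 1 := if_pos rfl
  have h1 : sgn F 1 = -1 := if_neg (by decide)
  rcases zmod2_cases p with hp | hp <;> rcases zmod2_cases q with hq | hq <;>
      subst hp <;> subst hq
  · rw [add_zero, h0, one_mul]
  · rw [zero_add, h0, one_mul]
  · rw [add_zero, h1, h0, mul_one]
  · rw [show ((1:ZMod 2)+1) = 0 from by decide, h0, h1]; ring

lemma sgn_smul_sgn_smul {M : Type} [AddCommGroup M] [Module F M] (p q : ZMod 2) (x : M) :
    sgn F p • sgn F q • x = sgn F (p + q) • x := by
  rw [smul_smul, sgn_mul_sgn]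

lemma sgn_sq_smul {M : Type} [AddCommGroup M] [Module F M] (p : ZMod 2) (x : M) :
    sgn F p • sgn F p • x = x := by
  rw [sgn_smul_sgn_smul, show p + p = 0 from by revert p; decide]
  simp [sgn]

-- zero lemmas for Gn operations
lemma gmul_zero (f : Gn n F) : gmul f (0 : Gn n F) = 0 := by
  funext K; exact Finset.sum_eq_zero fun I _ => by simp

lemma zero_gmul (g : Gn n F) : gmul (0 : Gn n F) g = 0 := by
  funext K; exact Finset.sum_eq_zero fun I _ => by simp

lemma pd_zero (j : Fin n) : pd j (0 : Gn n F) = 0 := by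
  funext K; simp [pd]

lemma gInv_zero : gInv (0 : Gn n F) = 0 := by
  funext K; simp [gInv]

lemma gbr_zero (f : Gn n F) : gbr f (0 : Gn n F) = 0 := by
  unfold gbr; simp [pd_zero, gmul_zero]

lemma zero_gbr (g : Gn n F) : gbr (0 : Gn n F) g = 0 := by
  unfold gbr; simp [gInv_zero, pd_zero, zero_gmul]

lemma kmul_zero (x : Kan n F) : kmul x (0 : Kan n F) = 0 := by
  unfold kmul
  simp [gmul_zero, gInv_zero, gbr_zero]

lemma zero_kmul (y : Kan n F) : kmul (0 : Kan n F) y = 0 := by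
  unfold kmul
  simp [zero_gmul, zero_gbr]

end Aux

section Aux2

variable {F : Type} [Field F] {n : ℕ}
variable {V0 V1 : Type} [AddCommGroup V0] [Module F V0] [AddCommGroup V1] [Module F V1]
variable (act : V0 × V1 →ₗ[F] Kan n F →ₗ[F] V0 × V1)

lemma evenP_zero : evenP (0 : Gn n F) = 0 := by funext I; simp [evenP]
lemma oddP_zero : oddP (0 : Gn n F) = 0 := by funext I; simp [oddP]

lemma kEvenPart_zero : kEvenPart (0 : Kan n F) = 0 := by
  unfold kEvenPart; rw [Prod.fst_zero, Prod.snd_zero, evenP_zero, oddP_zero, Prod.mk_zero_zero]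

lemma kOddPart_zero : kOddPart (0 : Kan n F) = 0 := by
  unfold kOddPart; rw [Prod.fst_zero, Prod.snd_zero, evenP_zero, oddP_zero, Prod.mk_zero_zero]

lemma leftAct_zero_right (x : Kan n F) : leftAct act x (0 : V0 × V1) = 0 := by
  unfold leftAct
  rw [Prod.fst_zero, Prod.snd_zero, Prod.mk_zero_zero, map_zero]
  simp

lemma leftAct_zero_left (w : V0 × V1) : leftAct act (0 : Kan n F) w = 0 := by
  unfold leftAct
  rw [kEvenPart_zero, kOddPart_zero]
  simp

lemma emul_zero_left (z : Kan n F × (V0 × V1)) : emul act 0 z = 0 := by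
  unfold emul
  rw [Prod.fst_zero, Prod.snd_zero, zero_kmul, leftAct_zero_left, LinearMap.map_zero₂]
  simp

lemma emul_zero_right (z : Kan n F × (V0 × V1)) : emul act z 0 = 0 := by
  unfold emul
  rw [Prod.fst_zero, Prod.snd_zero, kmul_zero, leftAct_zero_right]
  simp

lemma emul_alg_alg (x y : Kan n F) :
    emul act (x, (0 : V0 × V1)) (y, (0 : V0 × V1)) = (kmul x y, 0) := by
  unfold emul
  rw [show ((x, (0 : V0 × V1)).2) = 0 from rfl, LinearMap.map_zero₂, leftAct_zero_right]
  simp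

lemma emul_alg_mod (x : Kan n F) (w : V0 × V1) :
    emul act (x, (0 : V0 × V1)) ((0 : Kan n F), w) = (0, leftAct act x w) := by
  unfold emul
  rw [show ((x, (0 : V0 × V1)).2) = 0 from rfl, kmul_zero, LinearMap.map_zero₂]
  simp

lemma emul_mod_alg (w : V0 × V1) (y : Kan n F) :
    emul act ((0 : Kan n F), w) (y, (0 : V0 × V1)) = (0, act w y) := by
  unfold emul
  rw [zero_kmul, leftAct_zero_right]
  simp

end Aux2

section Aux3

variable {F : Type} [Field F] {n : ℕ}
variable {V0 V1 : Type} [AddCommGroup V0] [Module F V0] [AddCommGroup V1] [Module F V1]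
variable (act : V0 × V1 →ₗ[F] Kan n F →ₗ[F] V0 × V1)

lemma homog_zero (p : ZMod 2) : homog p (0 : Gn n F) := fun _ _ => rfl

lemma homog_single (I : Finset (Fin n)) : homog (I.card : ZMod 2) (single I : Gn n F) := by
  intro K hK
  unfold single
  rw [if_neg]
  intro h; subst h; exact hK rfl

lemma homog_single' (I : Finset (Fin n)) (p : ZMod 2) (hp : p = (I.card : ZMod 2)) :
    homog p (single I : Gn n F) := hp ▸ homog_single I

lemma kHomog_zero (p : ZMod 2) : kHomog p (0 : Kan n F) := ⟨homog_zero p, homog_zero _⟩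

lemma kHomog_eK (I : Finset (Fin n)) : kHomog (I.card : ZMod 2) (eK I : Kan n F) :=
  ⟨homog_single I, homog_zero _⟩

lemma kHomog_beK (I : Finset (Fin n)) : kHomog ((I.card : ZMod 2) + 1) (beK I : Kan n F) :=
  ⟨homog_zero _, homog_single' I _ (by rw [show ∀ x : ZMod 2, x + 1 + 1 = x from by decide])⟩

lemma kHomog_smul {p : ZMod 2} {x : Kan n F} (c : F) (h : kHomog p x) : kHomog p (c • x) := by
  constructor
  · intro K hK
    rw [Prod.smul_fst, Pi.smul_apply, h.1 K hK, smul_zero]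
  · intro K hK
    rw [Prod.smul_snd, Pi.smul_apply, h.2 K hK, smul_zero]

lemma vHomog_zero (p : ZMod 2) : vHomog p (0 : V0 × V1) := by
  unfold vHomog; split <;> rfl

lemma evenP_of_homog0 {f : Gn n F} (h : homog 0 f) : evenP f = f := by
  funext K; unfold evenP; split
  · rfl
  · exact (h K (by assumption)).symm

lemma oddP_of_homog0 {f : Gn n F} (h : homog 0 f) : oddP f = 0 := by
  funext K; unfold oddP; split
  · next hc => exact h K (by rw [hc]; decide)
  · rfl

lemma evenP_of_homog1 {f : Gn n F} (h : homog 1 f) : evenP f = 0 := by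
  funext K; unfold evenP; split
  · next hc => exact h K (by rw [hc]; decide)
  · rfl

lemma oddP_of_homog1 {f : Gn n F} (h : homog 1 f) : oddP f = f := by
  funext K; unfold oddP; split
  · rfl
  · exact (h K (by assumption)).symm

end Aux3

section Aux4

variable {F : Type} [Field F] {n : ℕ}
variable {V0 V1 : Type} [AddCommGroup V0] [Module F V0] [AddCommGroup V1] [Module F V1]
variable (act : V0 × V1 →ₗ[F] Kan n F →ₗ[F] V0 × V1)

lemma kEvenPart_of_homog0 {x : Kan n F} (h : kHomog 0 x) : kEvenPart x = x := by
  have h2 : homog 1 x.2 := by rw [show (1 : ZMod 2) = 0 + 1 from by decide]; exact h.2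
  unfold kEvenPart
  rw [evenP_of_homog0 h.1, oddP_of_homog1 h2]

lemma kOddPart_of_homog0 {x : Kan n F} (h : kHomog 0 x) : kOddPart x = 0 := by
  have h2 : homog 1 x.2 := by rw [show (1 : ZMod 2) = 0 + 1 from by decide]; exact h.2
  unfold kOddPart
  rw [oddP_of_homog0 h.1, evenP_of_homog1 h2, Prod.mk_zero_zero]

lemma kEvenPart_of_homog1 {x : Kan n F} (h : kHomog 1 x) : kEvenPart x = 0 := by
  have h2 : homog 0 x.2 := by rw [show (0 : ZMod 2) = 1 + 1 from by decide]; exact h.2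
  unfold kEvenPart
  rw [evenP_of_homog1 h.1, oddP_of_homog0 h2, Prod.mk_zero_zero]

lemma kOddPart_of_homog1 {x : Kan n F} (h : kHomog 1 x) : kOddPart x = x := by
  have h2 : homog 0 x.2 := by rw [show (0 : ZMod 2) = 1 + 1 from by decide]; exact h.2
  unfold kOddPart
  rw [oddP_of_homog1 h.1, evenP_of_homog0 h2]

lemma leftAct_homog {p q : ZMod 2} {x : Kan n F} {w : V0 × V1}
    (hx : kHomog p x) (hw : vHomog q w) :
    leftAct act x w = sgn F (p * q) • act w x := by
  unfold leftAct
  rcases zmod2_cases p with hp | hp <;> subst hp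
  · rw [kEvenPart_of_homog0 hx, kOddPart_of_homog0 hx, zero_mul, sgn_zero, one_smul]
    simp
  · rw [kEvenPart_of_homog1 hx, kOddPart_of_homog1 hx, map_zero, one_mul]
    rcases zmod2_cases q with hq | hq <;> subst hq
    · have hw2 : w.2 = 0 := by simpa [vHomog] using hw
      have hwe : ((w.1, (0 : V1)) : V0 × V1) = w := by rw [← hw2]
      rw [hw2, Prod.mk_zero_zero, LinearMap.map_zero₂, hwe, sgn_zero, one_smul]
      simp
    · have hw1 : w.1 = 0 := by simpa [vHomog] using hw
      have hwe : (((0 : V0), w.2) : V0 × V1) = w := by rw [← hw1]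
      rw [hw1, Prod.mk_zero_zero, LinearMap.map_zero₂, hwe, sgn_one, neg_one_smul]
      simp

end Aux4

section Aux5

variable {F : Type} [Field F] {n : ℕ}
variable {V0 V1 : Type} [AddCommGroup V0] [Module F V0] [AddCommGroup V1] [Module F V1]
variable (act : V0 × V1 →ₗ[F] Kan n F →ₗ[F] V0 × V1)

lemma zmodexp : ∀ a b g p : ZMod 2,
    a*b + a*g = (b*p + a*p) + ((a*b + a*p + a*g + p*g) + (b+g)*p) := by decide

lemma main_identity (hJ : IsJordanBimod act) {α β γ : ZMod 2} {a b c : Kan n F}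
    (ha : kHomog α a) (hb : kHomog β b) (hc : kHomog γ c)
    (hbc : kHomog (β + γ) (kmul b c))
    (hab : kmul a b = 0) (hac : kmul a c = 0) (v : V0 × V1) :
    sgn F (α * β + α * γ) • act (act v (kmul b c)) a = act (act v a) (kmul b c) := by
  have key : ∀ (π : ZMod 2) (w : V0 × V1), vHomog π w →
      sgn F (α * β + α * γ) • act (act w (kmul b c)) a = act (act w a) (kmul b c) := by
    intro π w hw
    have hid := hJ.1.2 α β π γ (a, (0:V0×V1)) (b, (0:V0×V1)) ((0 : Kan n F), w) (c, (0:V0×V1))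
      ⟨ha, vHomog_zero α⟩ ⟨hb, vHomog_zero β⟩ ⟨kHomog_zero π, hw⟩ ⟨hc, vHomog_zero γ⟩
    have hAB : emul act ((a, (0:V0×V1))) ((b, (0:V0×V1))) = 0 := by
      rw [emul_alg_alg, hab, Prod.mk_zero_zero]
    have hAC : emul act ((a, (0:V0×V1))) ((c, (0:V0×V1))) = 0 := by
      rw [emul_alg_alg, hac, Prod.mk_zero_zero]
    rw [hAB, hAC] at hid
    simp only [emul_zero_left, smul_zero, zero_add, add_zero] at hid
    simp only [emul_alg_alg, emul_alg_mod, emul_mod_alg] at hid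
    simp only [Prod.smul_mk, smul_zero, Prod.mk.injEq] at hid
    have E1 := hid.2
    rw [leftAct_homog act hbc hw, leftAct_homog act ha hw] at E1
    simp only [LinearMap.map_smul₂] at E1
    rw [sgn_smul_sgn_smul, sgn_smul_sgn_smul] at E1
    have E3 : sgn F ((β*π + α*π) + ((α*β + α*π + α*γ + π*γ) + (β+γ)*π)) •
        act (act w (kmul b c)) a = act (act w a) (kmul b c) := by
      rw [← sgn_smul_sgn_smul, E1, sgn_sq_smul]
    rw [zmodexp α β γ π]
    exact E3
  have hsplit : ∀ u : Kan n F,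
      act v u = act ((v.1, (0:V1)) : V0 × V1) u + act (((0:V0), v.2) : V0 × V1) u := by
    intro u
    rw [← LinearMap.add_apply, ← map_add, Prod.mk_add_mk, add_zero, zero_add]
  have k0 := key 0 (v.1, (0:V1)) (by unfold vHomog; rw [if_pos rfl])
  have k1 := key 1 ((0:V0), v.2) (by unfold vHomog; rw [if_neg (by decide)])
  rw [hsplit (kmul b c), hsplit a]
  simp only [map_add, LinearMap.add_apply, smul_add, k0, k1]

end Aux5

section Aux6

open Finset

variable {F : Type} [Field F] {n : ℕ}

lemma gmul_single_single (A B : Finset (Fin n)) (K : Finset (Fin n)) :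
    gmul (single A) (single B : Gn n F) K
      = if A ⊆ K ∧ K \ A = B then (gsign A (K \ A) : F) else 0 := by
  unfold gmul single
  by_cases hA : A ⊆ K
  · rw [Finset.sum_eq_single A]
    · rw [if_pos rfl, mul_one]
      by_cases hB : K \ A = B
      · rw [if_pos hB, if_pos ⟨hA, hB⟩, mul_one]
      · rw [if_neg hB, if_neg (by tauto), mul_zero]
    · intro I hI hne
      rw [if_neg hne, mul_zero, zero_mul]
    · intro h
      exact absurd (Finset.mem_powerset.mpr hA) h
  · rw [if_neg (by tauto)]
    refine Finset.sum_eq_zero fun I hI => ?_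
    have : I ≠ A := by
      intro h; subst h; exact hA (Finset.mem_powerset.mp hI)
    rw [if_neg this, mul_zero, zero_mul]

lemma gInv_single (I : Finset (Fin n)) :
    gInv (single I : Gn n F) = ((-1 : F) ^ I.card) • (single I : Gn n F) := by
  funext K
  unfold gInv single
  rw [Pi.smul_apply, smul_eq_mul]
  by_cases h : K = I
  · subst h; rfl
  · rw [if_neg h, mul_zero, mul_zero]

lemma gmul_smul_right (f g : Gn n F) (c : F) : gmul f (c • g) = c • gmul f g := by
  funext K
  unfold gmul
  rw [Pi.smul_apply, smul_eq_mul, Finset.mul_sum]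
  refine Finset.sum_congr rfl fun I _ => ?_
  rw [Pi.smul_apply, smul_eq_mul]
  ring

lemma pd_gInv_single_empty (i : Fin n) : pd i (gInv (single (∅ : Finset (Fin n)) : Gn n F)) = 0 := by
  funext K
  unfold pd gInv single
  rw [Pi.zero_apply]
  split
  · rfl
  · rw [if_neg (Finset.insert_ne_empty i K), mul_zero, mul_zero]

lemma gbr_gInv_single_empty (f : Gn n F) : gbr f (gInv (single (∅ : Finset (Fin n)))) = 0 := by
  unfold gbr
  simp [pd_gInv_single_empty, gmul_zero]

-- L1 : \bar e_J · e_I = 0 when I ∩ J ≠ ∅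
lemma gmul_single_single_of_inter {I J : Finset (Fin n)} (h : (I ∩ J).Nonempty) :
    gmul (single J) (single I : Gn n F) = 0 := by
  funext K
  rw [Pi.zero_apply, gmul_single_single, if_neg]
  rintro ⟨hsub, hdiff⟩
  obtain ⟨i, hi⟩ := h
  rw [Finset.mem_inter] at hi
  have : i ∈ K \ J := hdiff.symm ▸ hi.1
  exact (Finset.mem_sdiff.mp this).2 hi.2

lemma kmul_beK_eK {I J : Finset (Fin n)} (h : (I ∩ J).Nonempty) :
    kmul (beK J : Kan n F) (eK I) = 0 := by
  unfold kmul beK eK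
  simp only [zero_gmul, gmul_zero, gInv_zero, gbr_zero, gInv_single, gmul_smul_right,
    gmul_single_single_of_inter h, smul_zero, add_zero, zero_add, Prod.mk_zero_zero]

end Aux6

section Aux7

open Finset

variable {F : Type} [Field F] {n : ℕ}

lemma gmul_single_empty (I : Finset (Fin n)) :
    gmul (single I) (single (∅ : Finset (Fin n)) : Gn n F) = single I := by
  funext K
  rw [gmul_single_single]
  unfold single
  by_cases h : K = I
  · subst h
    rw [if_pos ⟨Finset.Subset.refl K, Finset.sdiff_self K⟩, if_pos rfl, Finset.sdiff_self]
    unfold gsign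
    rw [Finset.product_empty, Finset.filter_empty, Finset.card_empty, pow_zero, Int.cast_one]
  · rw [if_neg, if_neg h]
    rintro ⟨hsub, hdiff⟩
    exact h (Finset.Subset.antisymm (Finset.sdiff_eq_empty_iff_subset.mp hdiff) hsub)

lemma gmul_single_singleton_erase {I : Finset (Fin n)} {i : Fin n} (hi : i ∈ I) :
    gmul (single {i}) (single (I.erase i) : Gn n F)
      = ((gsign {i} (I.erase i) : F)) • (single I : Gn n F) := by
  funext K
  rw [gmul_single_single, Pi.smul_apply, smul_eq_mul]
  unfold single
  by_cases h : K = I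
  · subst h
    have h1 : {i} ⊆ K := Finset.singleton_subset_iff.mpr hi
    have h2 : K \ {i} = K.erase i := (Finset.erase_eq K i).symm
    rw [if_pos ⟨h1, h2⟩, if_pos rfl, mul_one, h2]
  · rw [if_neg, if_neg h, mul_zero]
    rintro ⟨hsub, hdiff⟩
    apply h
    have hiK : i ∈ K := hsub (Finset.mem_singleton_self i)
    have h3 : insert i (K \ {i}) = insert i (I.erase i) := by rw [hdiff]
    rwa [← Finset.erase_eq, Finset.insert_erase hiK, Finset.insert_erase hi] at h3

lemma kmul_beK_beK_empty (J : Finset (Fin n)) :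
    kmul (beK J : Kan n F) (beK (∅ : Finset (Fin n))) = 0 := by
  unfold kmul beK
  simp only [zero_gmul, gInv_zero, gmul_zero, gbr_gInv_single_empty, add_zero, zero_add,
    Prod.mk_zero_zero]

lemma kmul_eK_beK_empty (I : Finset (Fin n)) :
    kmul (eK I : Kan n F) (beK (∅ : Finset (Fin n))) = beK I := by
  unfold kmul eK beK
  simp only [gmul_zero, zero_gmul, gInv_zero, zero_gbr, gmul_single_empty, add_zero, zero_add]

lemma kmul_eK_singleton_erase {I : Finset (Fin n)} {i : Fin n} (hi : i ∈ I) :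
    kmul (eK {i} : Kan n F) (eK (I.erase i))
      = ((gsign {i} (I.erase i) : F)) • (eK I : Kan n F) := by
  unfold kmul eK
  simp only [gmul_zero, zero_gmul, gInv_zero, zero_gbr, gbr_zero,
    gmul_single_singleton_erase hi, add_zero, zero_add]
  rw [Prod.smul_mk, smul_zero]

end Aux7

/-- for a Jordan bimodule `V` over `Kan(n)`: if `|I ∩ J| ≥ 2` then
`[R_{e_I}, R_{\bar{e_J}}]_s = 0`, and if `I ∩ J ≠ ∅` then `[R_{\bar{e_I}}, R_{\bar{e_J}}]_s = 0`. -/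
theorem supercommutator_mixed {F : Type} [Field F] (hchar : (2 : F) ≠ 0)
    {n : ℕ} (hn : 2 ≤ n)
    {V0 V1 : Type} [AddCommGroup V0] [Module F V0] [AddCommGroup V1] [Module F V1]
    (act : V0 × V1 →ₗ[F] Kan n F →ₗ[F] V0 × V1) (hJ : IsJordanBimod act) :
    ∀ (I J : Finset (Fin n)) (v : V0 × V1),
      (2 ≤ (I ∩ J).card →
        act (act v (eK I)) (beK J)
          - sgn F ((I.card : ZMod 2) * ((J.card : ZMod 2) + 1)) • act (act v (beK J)) (eK I)
          = 0) ∧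
      ((I ∩ J).Nonempty →
        act (act v (beK I)) (beK J)
          - sgn F (((I.card : ZMod 2) + 1) * ((J.card : ZMod 2) + 1)) •
              act (act v (beK J)) (beK I) = 0) := by
  intro I J v
  constructor
  · -- case |I ∩ J| ≥ 2
    intro h2
    obtain ⟨i, hi, j, hj, hij⟩ := Finset.one_lt_card.mp h2
    have hiI : i ∈ I := (Finset.mem_inter.mp hi).1
    have hiJ : i ∈ J := (Finset.mem_inter.mp hi).2
    have hjI : j ∈ I := (Finset.mem_inter.mp hj).1
    have hjJ : j ∈ J := (Finset.mem_inter.mp hj).2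
    have ha := kHomog_beK (F := F) J
    have hb := kHomog_eK (F := F) ({i} : Finset (Fin n))
    have hc := kHomog_eK (F := F) (I.erase i)
    have hab : kmul (beK J : Kan n F) (eK ({i} : Finset (Fin n))) = 0 :=
      kmul_beK_eK ⟨i, Finset.mem_inter.mpr ⟨Finset.mem_singleton_self i, hiJ⟩⟩
    have hac : kmul (beK J : Kan n F) (eK (I.erase i)) = 0 :=
      kmul_beK_eK ⟨j, Finset.mem_inter.mpr ⟨Finset.mem_erase.mpr ⟨hij.symm, hjI⟩, hjJ⟩⟩
    have h1I : 1 ≤ I.card := Finset.card_pos.mpr ⟨i, hiI⟩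
    have hbc : kHomog (((({i} : Finset (Fin n)).card : ZMod 2)) + (((I.erase i).card : ZMod 2)))
        (kmul (eK ({i} : Finset (Fin n)) : Kan n F) (eK (I.erase i))) := by
      rw [kmul_eK_singleton_erase hiI]
      apply kHomog_smul
      have hcard : ({i} : Finset (Fin n)).card + (I.erase i).card = I.card := by
        rw [Finset.card_singleton, Finset.card_erase_of_mem hiI]
        omega
      rw [show ((({i} : Finset (Fin n)).card : ZMod 2)) + (((I.erase i).card : ZMod 2))
          = (I.card : ZMod 2) from by rw [← Nat.cast_add, hcard]]
      exact kHomog_eK I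
    have main1 := main_identity act hJ ha hb hc hbc hab hac v
    rw [kmul_eK_singleton_erase hiI] at main1
    simp only [map_smul, LinearMap.map_smul₂] at main1
    have hcF : ((gsign {i} (I.erase i) : ℤ) : F) ≠ 0 := by
      unfold gsign
      push_cast
      exact pow_ne_zero _ (by norm_num)
    have main1' : ((gsign {i} (I.erase i) : ℤ) : F) •
        (sgn F (((J.card : ZMod 2) + 1) * (({i} : Finset (Fin n)).card : ZMod 2)
          + ((J.card : ZMod 2) + 1) * (((I.erase i).card : ZMod 2))) •
            act (act v (eK I)) (beK J))
        = ((gsign {i} (I.erase i) : ℤ) : F) • act (act v (beK J)) (eK I) := by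
      rw [smul_comm]
      exact main1
    have E := smul_right_injective (V0 × V1) hcF main1'
    have hq : ((J.card : ZMod 2) + 1) * (({i} : Finset (Fin n)).card : ZMod 2)
        + ((J.card : ZMod 2) + 1) * (((I.erase i).card : ZMod 2))
        = (I.card : ZMod 2) * ((J.card : ZMod 2) + 1) := by
      rw [Finset.card_singleton, Finset.card_erase_of_mem hiI, Nat.cast_sub h1I]
      push_cast
      ring
    rw [hq] at E
    rw [← E, sgn_sq_smul, sub_self]
  · -- case I ∩ J ≠ ∅
    intro h
    have ha := kHomog_beK (F := F) J
    have hb := kHomog_eK (F := F) I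
    have hc := kHomog_beK (F := F) (∅ : Finset (Fin n))
    have hbc : kHomog ((I.card : ZMod 2) + (((∅ : Finset (Fin n)).card : ZMod 2) + 1))
        (kmul (eK I : Kan n F) (beK (∅ : Finset (Fin n)))) := by
      rw [kmul_eK_beK_empty, show ((I.card : ZMod 2) + (((∅ : Finset (Fin n)).card : ZMod 2) + 1))
          = (I.card : ZMod 2) + 1 from by simp]
      exact kHomog_beK I
    have main2 := main_identity act hJ ha hb hc hbc (kmul_beK_eK h) (kmul_beK_beK_empty J) v
    rw [kmul_eK_beK_empty] at main2
    have hq : ((J.card : ZMod 2) + 1) * (I.card : ZMod 2)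
        + ((J.card : ZMod 2) + 1) * (((∅ : Finset (Fin n)).card : ZMod 2) + 1)
        = ((I.card : ZMod 2) + 1) * ((J.card : ZMod 2) + 1) := by
      simp only [Finset.card_empty, Nat.cast_zero, zero_add]
      ring
    rw [hq] at main2
    rw [← main2, sgn_sq_smul, sub_self]
end

section
/- Let P be a unital Poisson algebra with a generalized derivation E satisfying E(ab) = E(a)b + aE(b) - abE(1) and E({p,q}) = {E(p),q} + {p,E(q)} + {p,q}E(1), and let (A,D) be a commutative associative algebra with derivation D. Then the bracket on P ⊗ A defined by ⟨p⊗a, q⊗b⟩ = {p,q}⊗ab + E(p)q ⊗ aD(b) - E(q)p ⊗ D(a)b satisfies the generalized Leibniz identity ⟨xy, z⟩ = x⟨y,z⟩ + y⟨x,z⟩ - xy⟨1,z⟩ for all x, y, z ∈ P ⊗ A. -/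
/-!
Both sides are additive in each of `x`, `y`, `z`, so it suffices to check pure tensors
`p ⊗ a`, `q ⊗ b`, `r ⊗ c`. There `⟨1, r ⊗ c⟩ = E(1) r ⊗ D(c)` because `{1, r} = 0` and `D(1) = 0`,
skew-symmetry turns the Leibniz rule into `{pq, r} = p{q, r} + q{p, r}`, and the `- pq E(1)` term
of `E(pq)` is exactly what the correction `- xy⟨1, z⟩` cancels; what remains is a ring identity.
-/

open TensorProduct

theorem TensorProduct.eq_zero_of_forall_tmul₃ {R M N G : Type*} [CommSemiring R]
    [AddCommMonoid M] [Module R M] [AddCommMonoid N] [Module R N] [AddCommGroup G]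
    (f : M ⊗[R] N → M ⊗[R] N → M ⊗[R] N → G)
    (add₁ : ∀ x x' y z, f (x + x') y z = f x y z + f x' y z)
    (add₂ : ∀ x y y' z, f x (y + y') z = f x y z + f x y' z)
    (add₃ : ∀ x y z z', f x y (z + z') = f x y z + f x y z')
    (tmul : ∀ (m m' m'' : M) (n n' n'' : N), f (m ⊗ₜ n) (m' ⊗ₜ n') (m'' ⊗ₜ n'') = 0) :
    ∀ x y z, f x y z = 0 := by
  intro x y z
  induction z using TensorProduct.induction_on with
  | zero => simpa using add₃ x y 0 0
  | add z z' hz hz' => rw [add₃, hz, hz', add_zero]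
  | tmul m'' n'' =>
    induction x using TensorProduct.induction_on with
    | zero => simpa using add₁ 0 0 y (m'' ⊗ₜ n'')
    | add x x' hx hx' => rw [add₁, hx, hx', add_zero]
    | tmul m n =>
      induction y using TensorProduct.induction_on with
      | zero => simpa using add₂ (m ⊗ₜ n) 0 0 (m'' ⊗ₜ n'')
      | add y y' hy hy' => rw [add₂, hy, hy', add_zero]
      | tmul m' n' => exact tmul m m' m'' n n' n''

section Bracket

variable {F P : Type*} [CommRing F] [CommRing P] [Algebra F P] (pbr : P →ₗ[F] P →ₗ[F] P)

theorem bracket_one_right_of_leibniz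
    (hleib : ∀ p q r : P, pbr p (q * r) = pbr p q * r + q * pbr p r) (p : P) :
    pbr p 1 = 0 := by
  simpa using hleib p 1 1

theorem bracket_one_left_of_leibniz (hskew : ∀ p q : P, pbr p q = - pbr q p)
    (hleib : ∀ p q r : P, pbr p (q * r) = pbr p q * r + q * pbr p r) (r : P) :
    pbr 1 r = 0 := by
  rw [hskew, bracket_one_right_of_leibniz pbr hleib, neg_zero]

theorem bracket_mul_left_of_leibniz (hskew : ∀ p q : P, pbr p q = - pbr q p)
    (hleib : ∀ p q r : P, pbr p (q * r) = pbr p q * r + q * pbr p r) (p q r : P) :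
    pbr (p * q) r = p * pbr q r + q * pbr p r := by
  rw [hskew, hleib, hskew r p, hskew r q]
  ring

end Bracket

section LeibnizDefect

variable {F S : Type*} [CommRing F] [CommRing S] [Algebra F S] (br : S →ₗ[F] S →ₗ[F] S)

def leibnizDefect (x y z : S) : S :=
  br (x * y) z - (x * br y z + y * br x z - x * y * br 1 z)

theorem leibnizDefect_add_left (x x' y z : S) :
    leibnizDefect br (x + x') y z = leibnizDefect br x y z + leibnizDefect br x' y z := by
  simp only [leibnizDefect, add_mul, map_add, LinearMap.add_apply]
  ring

theorem leibnizDefect_add_middle (x y y' z : S) :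
    leibnizDefect br x (y + y') z = leibnizDefect br x y z + leibnizDefect br x y' z := by
  simp only [leibnizDefect, mul_add, add_mul, map_add, LinearMap.add_apply]
  ring

theorem leibnizDefect_add_right (x y z z' : S) :
    leibnizDefect br x y (z + z') = leibnizDefect br x y z + leibnizDefect br x y z' := by
  simp only [leibnizDefect, mul_add, map_add]
  ring

end LeibnizDefect

theorem leibnizDefect_tmul {F P A : Type*} [CommRing F] [CommRing P] [Algebra F P]
    [CommRing A] [Algebra F A] (pbr : P →ₗ[F] P →ₗ[F] P) (E : P →ₗ[F] P)
    (D : Derivation F A A) (br : (P ⊗[F] A) →ₗ[F] (P ⊗[F] A) →ₗ[F] (P ⊗[F] A))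
    (hskew : ∀ p q : P, pbr p q = - pbr q p)
    (hleib : ∀ p q r : P, pbr p (q * r) = pbr p q * r + q * pbr p r)
    (hE : ∀ a b : P, E (a * b) = E a * b + a * E b - a * b * E 1)
    (hbr : ∀ (p q : P) (a b : A),
      br (p ⊗ₜ a) (q ⊗ₜ b)
        = (pbr p q) ⊗ₜ (a * b) + (E p * q) ⊗ₜ (a * D b) - (E q * p) ⊗ₜ (D a * b))
    (p q r : P) (a b c : A) :
    leibnizDefect br (p ⊗ₜ a) (q ⊗ₜ b) (r ⊗ₜ c) = 0 := by
  rw [leibnizDefect, sub_eq_zero, Algebra.TensorProduct.one_def,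
    Algebra.TensorProduct.tmul_mul_tmul, hbr, hbr, hbr, hbr,
    bracket_mul_left_of_leibniz pbr hskew hleib, bracket_one_left_of_leibniz pbr hskew hleib,
    hE, D.leibniz, D.map_one_eq_zero]
  simp only [one_mul, mul_one, zero_mul, zero_tmul, tmul_zero, zero_add, sub_zero, smul_eq_mul,
    add_tmul, sub_tmul, tmul_add, mul_add, add_mul, mul_sub, sub_mul,
    Algebra.TensorProduct.tmul_mul_tmul]
  ring_nf

theorem tensor_bracket_leibniz_general {F : Type} [Field F]
    {P : Type} [CommRing P] [Algebra F P]
    (pbr : P →ₗ[F] P →ₗ[F] P)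
    (hskew : ∀ p q : P, pbr p q = - pbr q p)
    (hleib : ∀ p q r : P, pbr p (q * r) = pbr p q * r + q * pbr p r)
    (E : P →ₗ[F] P)
    (hE1 : ∀ a b : P, E (a * b) = E a * b + a * E b - a * b * E 1)
    {A : Type} [CommRing A] [Algebra F A]
    (D : Derivation F A A)
    (br : (P ⊗[F] A) →ₗ[F] (P ⊗[F] A) →ₗ[F] (P ⊗[F] A))
    (hbr : ∀ (p q : P) (a b : A),
      br (p ⊗ₜ a) (q ⊗ₜ b)
        = (pbr p q) ⊗ₜ (a * b) + (E p * q) ⊗ₜ (a * D b) - (E q * p) ⊗ₜ (D a * b)) :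
    ∀ x y z : P ⊗[F] A,
      br (x * y) z = x * br y z + y * br x z - (x * y) * br 1 z := by
  intro x y z
  rw [← sub_eq_zero]
  exact TensorProduct.eq_zero_of_forall_tmul₃ (leibnizDefect br)
    (leibnizDefect_add_left br) (leibnizDefect_add_middle br) (leibnizDefect_add_right br)
    (leibnizDefect_tmul pbr E D br hskew hleib hE1 hbr) x y z

/-- let `P` be a unital Poisson algebra with a generalized derivation
`E` satisfying `E(ab) = E(a)b + aE(b) - abE(1)` and
`E({p,q}) = {E(p),q} + {p,E(q)} + {p,q}E(1)`, and let `(A,D)` be a commutative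
associative algebra with a derivation `D`.  Then the bracket on `P ⊗ A` given on pure
tensors by `⟨p⊗a, q⊗b⟩ = {p,q}⊗ab + E(p)q ⊗ aD(b) - E(q)p ⊗ D(a)b` satisfies the
generalized Leibniz identity `⟨xy,z⟩ = x⟨y,z⟩ + y⟨x,z⟩ - xy⟨1,z⟩`. -/
theorem tensor_bracket_leibniz {F : Type} [Field F] (hchar : (2 : F) ≠ 0)
    {P : Type} [CommRing P] [Algebra F P]
    (pbr : P →ₗ[F] P →ₗ[F] P)
    (hskew : ∀ p q : P, pbr p q = - pbr q p)
    (hleib : ∀ p q r : P, pbr p (q * r) = pbr p q * r + q * pbr p r)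
    (hjac : ∀ p q r : P, pbr p (pbr q r) = pbr (pbr p q) r + pbr q (pbr p r))
    (E : P →ₗ[F] P)
    (hE1 : ∀ a b : P, E (a * b) = E a * b + a * E b - a * b * E 1)
    (hE2 : ∀ p q : P, E (pbr p q) = pbr (E p) q + pbr p (E q) + pbr p q * E 1)
    {A : Type} [CommRing A] [Algebra F A]
    (D : Derivation F A A)
    (br : (P ⊗[F] A) →ₗ[F] (P ⊗[F] A) →ₗ[F] (P ⊗[F] A))
    (hbr : ∀ (p q : P) (a b : A),
      br (p ⊗ₜ a) (q ⊗ₜ b)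
        = (pbr p q) ⊗ₜ (a * b) + (E p * q) ⊗ₜ (a * D b) - (E q * p) ⊗ₜ (D a * b)) :
    ∀ x y z : P ⊗[F] A,
      br (x * y) z = x * br y z + y * br x z - (x * y) * br 1 z :=
  tensor_bracket_leibniz_general pbr hskew hleib E hE1 D br hbr
end

section
/- With P, E, (A,D) and the bracket ⟨p⊗a, q⊗b⟩ = {p,q}⊗ab + E(p)q ⊗ aD(b) - E(q)p ⊗ D(a)b as above, the bracket satisfies the generalized Jacobi identity J(x,y,z) = S(x,y,z) for all x,y,z ∈ P ⊗ A, where J(x,y,z) = ⟨⟨x,y⟩,z⟩ + ⟨⟨y,z⟩,x⟩ + ⟨⟨z,x⟩,y⟩ and S(x,y,z) = ⟨x,y⟩⟨1,z⟩ + ⟨y,z⟩⟨1,x⟩ + ⟨z,x⟩⟨1,y⟩. In other words, ⟨,⟩ is a Jordan bracket on P ⊗ A. -/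
open TensorProduct

/-- with `P`, `E`, `(A,D)` and the bracket
`⟨p⊗a, q⊗b⟩ = {p,q}⊗ab + E(p)q ⊗ aD(b) - E(q)p ⊗ D(a)b` as in Statement 12, the
generalized Jacobi identity `J(x,y,z) = S(x,y,z)` holds, where
`J(x,y,z) = ⟨⟨x,y⟩,z⟩ + ⟨⟨y,z⟩,x⟩ + ⟨⟨z,x⟩,y⟩` and
`S(x,y,z) = ⟨x,y⟩⟨1,z⟩ + ⟨y,z⟩⟨1,x⟩ + ⟨z,x⟩⟨1,y⟩`; i.e. `⟨,⟩` is a Jordan bracket. -/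
theorem tensor_bracket_jacobi {F : Type} [Field F] (hchar : (2 : F) ≠ 0)
    {P : Type} [CommRing P] [Algebra F P]
    (pbr : P →ₗ[F] P →ₗ[F] P)
    (hskew : ∀ p q : P, pbr p q = - pbr q p)
    (hleib : ∀ p q r : P, pbr p (q * r) = pbr p q * r + q * pbr p r)
    (hjac : ∀ p q r : P, pbr p (pbr q r) = pbr (pbr p q) r + pbr q (pbr p r))
    (E : P →ₗ[F] P)
    (hE1 : ∀ a b : P, E (a * b) = E a * b + a * E b - a * b * E 1)
    (hE2 : ∀ p q : P, E (pbr p q) = pbr (E p) q + pbr p (E q) + pbr p q * E 1)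
    {A : Type} [CommRing A] [Algebra F A]
    (D : Derivation F A A)
    (br : (P ⊗[F] A) →ₗ[F] (P ⊗[F] A) →ₗ[F] (P ⊗[F] A))
    (hbr : ∀ (p q : P) (a b : A),
      br (p ⊗ₜ a) (q ⊗ₜ b)
        = (pbr p q) ⊗ₜ (a * b) + (E p * q) ⊗ₜ (a * D b) - (E q * p) ⊗ₜ (D a * b)) :
    ∀ x y z : P ⊗[F] A,
      br (br x y) z + br (br y z) x + br (br z x) y
        = br x y * br 1 z + br y z * br 1 x + br z x * br 1 y := by
  -- basic consequences
  have pbr_one : ∀ x : P, pbr x 1 = 0 := by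
    intro x
    have h : pbr x 1 = pbr x 1 + pbr x 1 := by
      simpa using hleib x 1 1
    exact add_eq_left.mp h.symm
  have one_pbr : ∀ x : P, pbr 1 x = 0 := by
    intro x; rw [hskew, pbr_one, neg_zero]
  -- Leibniz in the first argument
  have hleib' : ∀ x y z : P, pbr (x * y) z = pbr x z * y + x * pbr y z := by
    intro x y z
    rw [hskew, hleib, hskew z x, hskew z y]; ring
  -- Jacobi, rearranged
  have hjac' : ∀ x y z : P, pbr (pbr x y) z = pbr x (pbr y z) - pbr y (pbr x z) := by
    intro x y z
    rw [hjac x y z]; ring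
  -- the main pure-tensor computation
  have key : ∀ (p q r : P) (a b c : A),
      br (br (p ⊗ₜ a) (q ⊗ₜ b)) (r ⊗ₜ c) + br (br (q ⊗ₜ b) (r ⊗ₜ c)) (p ⊗ₜ a)
        + br (br (r ⊗ₜ c) (p ⊗ₜ a)) (q ⊗ₜ b)
        = br (p ⊗ₜ a) (q ⊗ₜ b) * br 1 (r ⊗ₜ c) + br (q ⊗ₜ b) (r ⊗ₜ c) * br 1 (p ⊗ₜ a)
          + br (r ⊗ₜ c) (p ⊗ₜ a) * br 1 (q ⊗ₜ b) := by
    intro p q r a b c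
    have o1 : pbr q p = - pbr p q := hskew q p
    have o2 : pbr r p = - pbr p r := hskew r p
    have o3 : pbr r q = - pbr q r := hskew r q
    have c1 : ∀ x y : P, pbr x (E y) = - pbr (E y) x := fun x y => hskew x (E y)
    have hnest : pbr r (pbr p q) = pbr q (pbr p r) - pbr p (pbr q r) := by
      rw [hskew r (pbr p q), hjac' p q r]; ring
    rw [Algebra.TensorProduct.one_def]
    simp only [hbr, map_add, map_sub, map_neg, LinearMap.add_apply, LinearMap.sub_apply,
      LinearMap.neg_apply, one_pbr, pbr_one, Derivation.map_one_eq_zero, zero_mul, mul_zero,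
      zero_tmul, tmul_zero, one_mul, mul_one, zero_add, add_zero, sub_zero, zero_sub]
    simp only [hbr, hE1, hE2, hjac', hleib', Derivation.leibniz, smul_eq_mul,
      map_add, map_sub, map_neg, LinearMap.add_apply, LinearMap.sub_apply, LinearMap.neg_apply,
      o1, o2, o3, c1, one_pbr, pbr_one, Derivation.map_one_eq_zero,
      zero_mul, mul_zero, neg_neg, mul_neg, neg_mul, zero_tmul, tmul_zero,
      neg_tmul, tmul_neg, add_tmul, tmul_add, sub_tmul, tmul_sub, one_mul, mul_one,
      zero_add, add_zero, sub_zero, zero_sub]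
    simp only [hnest, sub_tmul, tmul_sub, add_tmul, tmul_add, neg_tmul, tmul_neg,
      mul_neg, neg_mul, neg_neg]
    have tm : ∀ (u : P) (v : A),
        (u ⊗ₜ[F] v : P ⊗[F] A)
          = Algebra.TensorProduct.includeLeftRingHom (R := F) (A := P) (B := A) u
            * (Algebra.TensorProduct.includeRight (R := F) (A := P) (B := A) : A →ₐ[F] P ⊗[F] A) v := by
      intro u v
      simp [Algebra.TensorProduct.includeLeftRingHom_apply,
        Algebra.TensorProduct.includeRight_apply, Algebra.TensorProduct.tmul_mul_tmul]
    simp only [tm, map_add, map_sub, map_neg, map_mul, map_one]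
    ring
  -- reduce to pure tensors by trilinearity
  intro x y z
  induction x using TensorProduct.induction_on with
  | zero => simp
  | add u v hu hv =>
      simp only [map_add, LinearMap.add_apply, add_mul, mul_add] at *
      linear_combination hu + hv
  | tmul p a =>
    induction y using TensorProduct.induction_on with
    | zero => simp
    | add u v hu hv =>
        simp only [map_add, LinearMap.add_apply, add_mul, mul_add] at *
        linear_combination hu + hv
    | tmul q b =>
      induction z using TensorProduct.induction_on with
      | zero => simp
      | add u v hu hv =>
          simp only [map_add, LinearMap.add_apply, add_mul, mul_add] at *
          linear_combination hu + hv
      | tmul r c => exact key p q r a b c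
end
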